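/- Let f : ℝ → ℂ be a differentiable function. Then the function x ↦ (x + i)·f(x) is operator Lipschitz if and only if f is a multiplier of the operator Lipschitz functions, i.e., for every operator Lipschitz function h : ℝ → ℂ, the product function x ↦ f(x)·h(x) is operator Lipschitz. -/

import Mathlib

/-! With `k x = (x + i) f x` and `r x = h x / (x + i)` one has `f h = k r` and `h = (x + i) r`, so
`f(A) h(A) - f(B) h(B) = f(A) (h(A) - h(B)) + (k(A) - k(B)) r(B) - f(A) (A - B) r(B)`.
Testing on scalar operators shows that operator Lipschitz functions are Lipschitz, hence
`f = k / (x + i)` and `r` are bounded and every term is `O(‖A - B‖)`. Conversely, `x + i` is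
operator Lipschitz, so a multiplier `f` makes `f (x + i)` operator Lipschitz. -/

open Complex

universe u

/-- Functional calculus `g(A)` for `g : ℝ → ℂ` and a (self-adjoint, hence normal)
bounded operator `A`, obtained by applying `z ↦ g (Re z)` to `A` via the continuous
functional calculus. -/
noncomputable def opFC {H : Type u} [NormedAddCommGroup H] [InnerProductSpace ℂ H]
    [CompleteSpace H] (g : ℝ → ℂ) (A : H →L[ℂ] H) : H →L[ℂ] H :=
  cfc (fun z : ℂ => g z.re) A

/-- A function `g : ℝ → ℂ` is operator Lipschitz if there is `C ≥ 0` such that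
`‖g(A) − g(B)‖ ≤ C ‖A − B‖` for all bounded self-adjoint operators `A, B` on every
complex Hilbert space. -/
def OperatorLipschitz (g : ℝ → ℂ) : Prop :=
  ∃ C : ℝ, 0 ≤ C ∧ ∀ (H : Type u) (_ : NormedAddCommGroup H) (_ : InnerProductSpace ℂ H)
    (_ : CompleteSpace H) (A B : H →L[ℂ] H), IsSelfAdjoint A → IsSelfAdjoint B →
    ‖opFC g A - opFC g B‖ ≤ C * ‖A - B‖

section OpFC

variable {H : Type*} [NormedAddCommGroup H] [InnerProductSpace ℂ H] [CompleteSpace H]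

lemma opFC_eq_mul {g g₁ g₂ : ℝ → ℂ} (hg : ∀ x, g x = g₁ x * g₂ x) (hg₁ : Continuous g₁)
    (hg₂ : Continuous g₂) {A : H →L[ℂ] H} (hA : IsSelfAdjoint A) :
    opFC g A = opFC g₁ A * opFC g₂ A := by
  have := hA.isStarNormal
  rw [opFC, cfc_congr fun z _ => hg z.re]
  exact cfc_mul _ _ A (hg₁.comp continuous_re).continuousOn (hg₂.comp continuous_re).continuousOn

lemma opFC_ofReal_add_I {A : H →L[ℂ] H} (hA : IsSelfAdjoint A) :
    opFC (fun x : ℝ => (x : ℂ) + I) A = A + I • 1 := by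
  have := hA.isStarNormal
  rw [opFC, cfc_congr (g := fun z : ℂ => z + I) fun z hz => by rw [← hA.mem_spectrum_eq_re hz],
    cfc_add A (fun z : ℂ => z) (fun _ => I), cfc_id' ℂ A, cfc_const I A,
    Algebra.algebraMap_eq_smul_one]

lemma norm_opFC_le {g : ℝ → ℂ} {c : ℝ} (hc : 0 ≤ c) (hg : ∀ x, ‖g x‖ ≤ c) (A : H →L[ℂ] H) :
    ‖opFC g A‖ ≤ c :=
  norm_cfc_le hc fun z _ => hg z.re

lemma opFC_algebraMap (g : ℝ → ℂ) (t : ℝ) :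
    opFC g (algebraMap ℂ (H →L[ℂ] H) t) = algebraMap ℂ (H →L[ℂ] H) (g t) := by
  rw [opFC, cfc_algebraMap, ofReal_re]

end OpFC

lemma one_le_norm_ofReal_add_I (x : ℝ) : 1 ≤ ‖(x : ℂ) + I‖ := by
  simpa using abs_im_le_norm ((x : ℂ) + I)

lemma abs_le_norm_ofReal_add_I (x : ℝ) : |x| ≤ ‖(x : ℂ) + I‖ := by
  simpa using abs_re_le_norm ((x : ℂ) + I)

lemma ofReal_add_I_ne_zero (x : ℝ) : (x : ℂ) + I ≠ 0 :=
  norm_pos_iff.mp (one_pos.trans_le (one_le_norm_ofReal_add_I x))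

lemma LipschitzWith.norm_div_ofReal_add_I_le {g : ℝ → ℂ} {C : NNReal} (hg : LipschitzWith C g)
    (x : ℝ) : ‖g x / ((x : ℂ) + I)‖ ≤ ‖g 0‖ + C := by
  have hx : ‖g x‖ ≤ ‖g 0‖ + C * |x| := by
    simpa using (norm_le_insert' (g x) (g 0)).trans (add_le_add_right (hg.norm_sub_le x 0) _)
  rw [norm_div, div_le_iff₀ (one_pos.trans_le (one_le_norm_ofReal_add_I x))]
  nlinarith [one_le_norm_ofReal_add_I x, abs_le_norm_ofReal_add_I x, norm_nonneg (g 0), C.2]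

lemma norm_mul_sub_mul_le {R : Type*} [NormedRing R] {a b c fa ha hb ka kb rb : R}
    (hhb : hb = (b + c) * rb) (hka : ka = fa * (a + c)) :
    ‖fa * ha - kb * rb‖ ≤ ‖fa‖ * ‖ha - hb‖ + ‖ka - kb‖ * ‖rb‖ + ‖fa‖ * ‖a - b‖ * ‖rb‖ := by
  have key : fa * ha - kb * rb = fa * (ha - hb) + (ka - kb) * rb - fa * (a - b) * rb := by
    rw [hhb, hka]; noncomm_ring
  rw [key]
  refine (norm_sub_le _ _).trans (add_le_add ((norm_add_le _ _).trans
    (add_le_add (norm_mul_le _ _) (norm_mul_le _ _))) ((norm_mul_le _ _).trans ?_))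
  gcongr
  exact norm_mul_le _ _

namespace OperatorLipschitz

theorem exists_lipschitzWith {g : ℝ → ℂ} (hg : OperatorLipschitz.{u} g) :
    ∃ C : NNReal, LipschitzWith C g := by
  obtain ⟨C, hC, hgC⟩ := hg
  let E := EuclideanSpace ℂ (ULift.{u} (Fin 1))
  refine ⟨⟨C, hC⟩, LipschitzWith.of_dist_le_mul fun a b => ?_⟩
  have hsa (t : ℝ) : IsSelfAdjoint (algebraMap ℂ (E →L[ℂ] E) t) :=
    IsSelfAdjoint.algebraMap _ ((im_eq_zero_iff_isSelfAdjoint _).mp (ofReal_im t))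
  have := hgC E _ _ _ _ _ (hsa a) (hsa b)
  rwa [opFC_algebraMap, opFC_algebraMap, ← map_sub, ← map_sub, norm_algebraMap',
    norm_algebraMap', ← ofReal_sub, norm_real, ← dist_eq_norm, ← dist_eq_norm] at this

theorem ofReal_add_I : OperatorLipschitz.{u} fun x : ℝ => (x : ℂ) + I :=
  ⟨1, zero_le_one, fun H _ _ _ A B hA hB => by
    rw [opFC_ofReal_add_I hA, opFC_ofReal_add_I hB, add_sub_add_right_eq_sub, one_mul]⟩

end OperatorLipschitz

theorem OperatorLipschitz.mul_of_ofReal_add_I_mul {f h : ℝ → ℂ}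
    (hk : OperatorLipschitz.{u} fun x : ℝ => ((x : ℂ) + I) * f x)
    (hh : OperatorLipschitz.{u} h) : OperatorLipschitz.{u} fun x => f x * h x := by
  set k : ℝ → ℂ := fun x => ((x : ℂ) + I) * f x with hk_def
  set r : ℝ → ℂ := fun x => h x / ((x : ℂ) + I) with hr_def
  obtain ⟨Lk, hLk⟩ := hk.exists_lipschitzWith
  obtain ⟨Lh, hLh⟩ := hh.exists_lipschitzWith
  obtain ⟨Ck, hCk0, hCk⟩ := hk
  obtain ⟨Ch, hCh0, hCh⟩ := hh
  have hcont : Continuous fun x : ℝ => (x : ℂ) + I := by fun_prop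
  have hfk (x : ℝ) : f x = k x / ((x : ℂ) + I) := by
    rw [hk_def, mul_div_cancel_left₀ _ (ofReal_add_I_ne_zero x)]
  have hhr (x : ℝ) : h x = ((x : ℂ) + I) * r x := by
    rw [hr_def, mul_div_cancel₀ _ (ofReal_add_I_ne_zero x)]
  have hf : Continuous f := by
    rw [funext hfk]; exact hLk.continuous.div hcont ofReal_add_I_ne_zero
  have hr : Continuous r := hLh.continuous.div hcont ofReal_add_I_ne_zero
  set Mf : ℝ := ‖k 0‖ + Lk
  set Mh : ℝ := ‖h 0‖ + Lh
  refine ⟨Mf * Ch + Ck * Mh + Mf * Mh, by positivity, fun H _ _ _ A B hA hB => ?_⟩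
  have hFA : ‖opFC f A‖ ≤ Mf :=
    norm_opFC_le (by positivity) (fun x => hfk x ▸ hLk.norm_div_ofReal_add_I_le x) A
  have hRB : ‖opFC r B‖ ≤ Mh := norm_opFC_le (by positivity) hLh.norm_div_ofReal_add_I_le B
  have hA_mul : opFC (fun x => f x * h x) A = opFC f A * opFC h A :=
    opFC_eq_mul (fun _ => rfl) hf hLh.continuous hA
  have hB_mul : opFC (fun x => f x * h x) B = opFC k B * opFC r B :=
    opFC_eq_mul (fun x => by rw [hhr x, hk_def]; ring) hLk.continuous hr hB
  have hHB : opFC h B = (B + I • 1) * opFC r B := by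
    rw [opFC_eq_mul hhr hcont hr hB, opFC_ofReal_add_I hB]
  have hKA : opFC k A = opFC f A * (A + I • 1) := by
    rw [opFC_eq_mul (fun x => mul_comm _ _) hf hcont hA, opFC_ofReal_add_I hA]
  rw [hA_mul, hB_mul]
  calc _ ≤ _ := norm_mul_sub_mul_le hHB hKA
    _ ≤ Mf * (Ch * ‖A - B‖) + Ck * ‖A - B‖ * Mh + Mf * ‖A - B‖ * Mh := by
      gcongr
      exacts [hCh H _ _ _ A B hA hB, hCk H _ _ _ A B hA hB]
    _ = _ := by ring

theorem stmt6_general (f : ℝ → ℂ) :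
    OperatorLipschitz.{u} (fun x : ℝ => ((x : ℂ) + I) * f x) ↔
      ∀ h : ℝ → ℂ, OperatorLipschitz.{u} h →
        OperatorLipschitz.{u} (fun x : ℝ => f x * h x) := by
  refine ⟨fun hk h hh => hk.mul_of_ofReal_add_I_mul hh, fun hmul => ?_⟩
  simpa only [mul_comm (f _)] using hmul _ OperatorLipschitz.ofReal_add_I

/-- Theorem 4.1, equivalence (b) ⇔ (c): for a differentiable `f : ℝ → ℂ`, the function
`x ↦ (x + i) f x` is operator Lipschitz if and only if `f` is a multiplier of the
operator Lipschitz functions, i.e. `f·h` is operator Lipschitz for every operator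
Lipschitz `h`. -/
theorem stmt6 (f : ℝ → ℂ) (hf : Differentiable ℝ f) :
    OperatorLipschitz.{u} (fun x : ℝ => ((x : ℂ) + I) * f x) ↔
      ∀ h : ℝ → ℂ, OperatorLipschitz.{u} h →
        OperatorLipschitz.{u} (fun x : ℝ => f x * h x) :=
  stmt6_general f
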